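/- Let 0 → M →^α N →^β L → 0 be an exact sequence of W(k)_σ-modules of finite W(k)-length, with α and β generalized W(k)_σ-homomorphisms. Then the induced sequence of semistable parts 0 → M^{ss} → N^{ss} → L^{ss} → 0 is also exact. -/

import Mathlib

/-!
Frobenius is injective on the semistable part of a module of finite length: the kernels of the
`σ^n`-semilinear iterates `F^n` are submodules, so they stabilize at some `n₀`, and an element of
`F^e(L)` with `e ≥ n₀` killed by some `F^n` is already zero. So if `n ∈ N^{ss}` and `β n = 0`,
write `n = F^{e_M}(n')` with `n' ∈ N^{ss}`: then `β n' ∈ L^{ss}` is killed by `F^{e_M}`, hence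
zero, so `n' = α m` and `n = α (F^{e_M} m)`.
-/

noncomputable section

/-- The `i`-th power (`i : ℤ`) of the Witt-vector Frobenius automorphism `σ` of `W(k)`. -/
def sigmaZPow (p : ℕ) [Fact p.Prime] (k : Type*) [Field k] [CharP k p] [PerfectRing k p]
    (i : ℤ) : WittVector p k ≃+* WittVector p k :=
  ((WittVector.frobeniusEquiv p k : RingAut (WittVector p k)) ^ i :
    RingAut (WittVector p k))

open Function Set

section StableRange

variable {α β : Type*}

theorem Function.Semiconj.image_range_iterate {f : α → β} {ga : α → α} {gb : β → β}
    (h : Semiconj f ga gb) (n : ℕ) : f '' range ga^[n] = gb^[n] '' range f := by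
  rw [← range_comp, ← range_comp, (h.iterate_right n).comp_eq]

theorem Function.Semiconj.image_stable_range_subset {f : α → β} {ga : α → α} {gb : β → β}
    (h : Semiconj f ga gb) {a b : ℕ} (ha : ∀ e, a ≤ e → range ga^[e] = range ga^[a])
    (hb : ∀ e, b ≤ e → range gb^[e] = range gb^[b]) :
    f '' range ga^[a] ⊆ range gb^[b] := by
  rw [← ha (max a b) (le_max_left _ _), ← hb (max a b) (le_max_right _ _),
    h.image_range_iterate]
  exact image_subset_range _ _

theorem Function.Semiconj.image_stable_range_eq {f : α → β} {ga : α → α} {gb : β → β}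
    (h : Semiconj f ga gb) (hf : Surjective f) {a b : ℕ}
    (ha : ∀ e, a ≤ e → range ga^[e] = range ga^[a])
    (hb : ∀ e, b ≤ e → range gb^[e] = range gb^[b]) :
    f '' range ga^[a] = range gb^[b] := by
  rw [← ha (max a b) (le_max_left _ _), ← hb (max a b) (le_max_right _ _),
    h.image_range_iterate, hf.range_eq, image_univ]

end StableRange

section Kernels

variable {R L : Type*} [Semiring R] [AddCommMonoid L] [Module R L]

theorem iterate_map_smul_of_semilinear (σ : R →+* R) (F : L →+ L)
    (hF : ∀ (r : R) (x : L), F (r • x) = σ r • F x) (n : ℕ) (r : R) (x : L) :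
    F^[n] (r • x) = σ^[n] r • F^[n] x := by
  induction n generalizing r x with
  | zero => rfl
  | succ n ih => rw [iterate_succ_apply, iterate_succ_apply, iterate_succ_apply, hF, ih]

theorem exists_iterate_ker_stabilizes [IsNoetherian R L] (σ : R →+* R) (F : L →+ L)
    (hF : ∀ (r : R) (x : L), F (r • x) = σ r • F x) :
    ∃ n₀, ∀ n x, F^[n] x = 0 → F^[n₀] x = 0 := by
  let K : ℕ →o Submodule R L :=
    { toFun n :=
        { carrier := {x | F^[n] x = 0}
          add_mem' {x y} (hx : F^[n] x = 0) (hy : F^[n] y = 0) :=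
            show F^[n] (x + y) = 0 by rw [iterate_map_add, hx, hy, add_zero]
          zero_mem' := iterate_map_zero F n
          smul_mem' r x (hx : F^[n] x = 0) :=
            show F^[n] (r • x) = 0 by
              rw [iterate_map_smul_of_semilinear σ F hF, hx, smul_zero] }
      monotone' := monotone_nat_of_le_succ fun n x (hx : F^[n] x = 0) =>
        show F^[n + 1] x = 0 by rw [iterate_succ_apply', hx, map_zero] }
  obtain ⟨n₀, hn₀⟩ := monotone_stabilizes_iff_noetherian.mpr ‹_› K
  refine ⟨n₀, fun n x hx => ?_⟩
  have hx' : x ∈ K (max n n₀) := K.monotone (le_max_left n n₀) hx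
  rwa [← hn₀ _ (le_max_right n n₀)] at hx'

end Kernels

theorem eq_zero_of_iterate_eq_zero_of_mem_stable_range {L : Type*} [AddZeroClass L]
    (F : L →+ L) {n₀ a : ℕ} (hker : ∀ n x, F^[n] x = 0 → F^[n₀] x = 0)
    (ha : ∀ e, a ≤ e → range F^[e] = range F^[a]) {x : L} (hx : x ∈ range F^[a]) {e : ℕ}
    (hex : F^[e] x = 0) : x = 0 := by
  rw [← ha (max a n₀) (le_max_left _ _)] at hx
  obtain ⟨y, rfl⟩ := hx
  have hy : F^[n₀] y = 0 := hker (e + max a n₀) y (by rwa [iterate_add_apply])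
  obtain ⟨d, hd⟩ := Nat.exists_eq_add_of_le' (le_max_right a n₀)
  rw [hd, iterate_add_apply, hy, iterate_map_zero]

theorem image_stable_range_eq_inter_ker {M N L : Type*} [AddZeroClass M] [AddZeroClass N]
    [AddZeroClass L] {FM : M → M} {FN : N → N} {FL : L → L} {α : M →+ N} {β : N →+ L}
    (hα : Semiconj α FM FN) (hβ : Semiconj β FN FL) (hexact : range α = {n | β n = 0})
    {a b c : ℕ} (ha : ∀ e, a ≤ e → range FM^[e] = range FM^[a])
    (hb : ∀ e, b ≤ e → range FN^[e] = range FN^[b])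
    (hc : ∀ e, c ≤ e → range FL^[e] = range FL^[c])
    (hFL : ∀ e x, x ∈ range FL^[c] → FL^[e] x = 0 → x = 0) :
    α '' range FM^[a] = range FN^[b] ∩ {n | β n = 0} := by
  refine Subset.antisymm (fun _ ⟨m, hm, hmn⟩ =>
    ⟨hα.image_stable_range_subset ha hb ⟨m, hm, hmn⟩, hexact ▸ hmn ▸ mem_range_self m⟩) ?_
  rintro _ ⟨hn, hβn : β _ = 0⟩
  rw [← hb (a + b) le_add_self] at hn
  obtain ⟨y, rfl⟩ := hn
  rw [iterate_add_apply] at hβn ⊢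
  have hβy : β (FN^[b] y) = 0 :=
    hFL a _ (hβ.image_stable_range_subset hb hc ⟨_, mem_range_self y, rfl⟩)
      (hβ.iterate_right a _ ▸ hβn)
  obtain ⟨m, hm⟩ : FN^[b] y ∈ range α := hexact ▸ hβy
  exact ⟨FM^[a] m, mem_range_self m, by rw [hα.iterate_right a m, hm]⟩

theorem semistable_part_exact_general
    (p : ℕ) [Fact p.Prime] (k : Type*) [Field k]
    (M N L : Type*) [AddCommGroup M] [AddCommGroup N] [AddCommGroup L]
    [Module (WittVector p k) L]
    (hL : IsFiniteLength (WittVector p k) L)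
    (FM : M →+ M) (FN : N →+ N) (FL : L →+ L)
    (hFL : ∀ (r : WittVector p k) (x : L), FL (r • x) = WittVector.frobenius r • FL x)
    (α : M →+ N) (β : N →+ L)
    (hcommα : ∀ m : M, α (FM m) = FN (α m))
    (hcommβ : ∀ n : N, β (FN n) = FL (β n))
    (hinj : Function.Injective α)
    (hexact : Set.range α = {n : N | β n = 0})
    (hsurj : Function.Surjective β)
    (eM eN eL : ℕ)
    (heM : ∀ e : ℕ, eM ≤ e → Set.range (⇑FM)^[e] = Set.range (⇑FM)^[eM])
    (heN : ∀ e : ℕ, eN ≤ e → Set.range (⇑FN)^[e] = Set.range (⇑FN)^[eN])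
    (heL : ∀ e : ℕ, eL ≤ e → Set.range (⇑FL)^[e] = Set.range (⇑FL)^[eL]) :
    Set.InjOn α (Set.range (⇑FM)^[eM]) ∧
    α '' Set.range (⇑FM)^[eM] = Set.range (⇑FN)^[eN] ∩ {n : N | β n = 0} ∧
    β '' Set.range (⇑FN)^[eN] = Set.range (⇑FL)^[eL] := by
  have : IsNoetherian (WittVector p k) L := (isFiniteLength_iff_isNoetherian_isArtinian.mp hL).1
  obtain ⟨n₀, hker⟩ := exists_iterate_ker_stabilizes WittVector.frobenius FL hFL
  refine ⟨hinj.injOn, ?_, Semiconj.image_stable_range_eq hcommβ hsurj heN heL⟩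
  exact image_stable_range_eq_inter_ker hcommα hcommβ hexact heM heN heL
    fun e x hx => eq_zero_of_iterate_eq_zero_of_mem_stable_range FL hker heL hx

/-- Given a short exact sequence `0 → M →α N →β L → 0` of `W(k)_σ`-modules
of finite `W(k)`-length, with `α`, `β` generalized `W(k)_σ`-homomorphisms, the induced
sequence of semistable parts `0 → M^{ss} → N^{ss} → L^{ss} → 0` is exact: `α` is injective
on `M^{ss}`, `α(M^{ss})` is exactly the kernel of `β` inside `N^{ss}`, and `β` maps
`N^{ss}` onto `L^{ss}`. Semistable parts are stable images of Frobenius iterates. -/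
theorem semistable_part_exact
    (p : ℕ) [Fact p.Prime] (k : Type*) [Field k] [CharP k p] [PerfectRing k p]
    (M N L : Type*) [AddCommGroup M] [AddCommGroup N] [AddCommGroup L]
    [Module (WittVector p k) M] [Module (WittVector p k) N] [Module (WittVector p k) L]
    (hM : IsFiniteLength (WittVector p k) M) (hN : IsFiniteLength (WittVector p k) N)
    (hL : IsFiniteLength (WittVector p k) L)
    (FM : M →+ M) (FN : N →+ N) (FL : L →+ L)
    (hFM : ∀ (r : WittVector p k) (m : M), FM (r • m) = WittVector.frobenius r • FM m)
    (hFN : ∀ (r : WittVector p k) (n : N), FN (r • n) = WittVector.frobenius r • FN n)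
    (hFL : ∀ (r : WittVector p k) (x : L), FL (r • x) = WittVector.frobenius r • FL x)
    (α : M →+ N) (β : N →+ L) (iα iβ : ℤ)
    (hcommα : ∀ m : M, α (FM m) = FN (α m))
    (hcommβ : ∀ n : N, β (FN n) = FL (β n))
    (hsemiα : ∀ (r : WittVector p k) (m : M), α (r • m) = sigmaZPow p k iα r • α m)
    (hsemiβ : ∀ (r : WittVector p k) (n : N), β (r • n) = sigmaZPow p k iβ r • β n)
    (hinj : Function.Injective α)
    (hexact : Set.range α = {n : N | β n = 0})
    (hsurj : Function.Surjective β)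
    (eM eN eL : ℕ)
    (heM : ∀ e : ℕ, eM ≤ e → Set.range (⇑FM)^[e] = Set.range (⇑FM)^[eM])
    (heN : ∀ e : ℕ, eN ≤ e → Set.range (⇑FN)^[e] = Set.range (⇑FN)^[eN])
    (heL : ∀ e : ℕ, eL ≤ e → Set.range (⇑FL)^[e] = Set.range (⇑FL)^[eL]) :
    Set.InjOn α (Set.range (⇑FM)^[eM]) ∧
    α '' Set.range (⇑FM)^[eM] = Set.range (⇑FN)^[eN] ∩ {n : N | β n = 0} ∧
    β '' Set.range (⇑FN)^[eN] = Set.range (⇑FL)^[eL] :=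
  semistable_part_exact_general p k M N L hL FM FN FL hFL α β hcommα hcommβ hinj hexact hsurj eM eN
    eL heM heN heL
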